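/- arXiv:2512.12969 — 4 statements merged into one kernel-verified Lean document; each statement's English description precedes it below -/
import Mathlib

section
/- Let T1 and T2 be two rooted binary phylogenetic X-trees. Then the set of rooted triples displayed by T1 equals the set of rooted triples displayed by T2 if and only if T1 is isomorphic to T2. -/
/-- A (candidate) rooted phylogenetic network structure: a directed graph on a
vertex type `V` with a distinguished root and a labelling of (intended) leaves
by elements of `X`.  The combinatorial axioms are imposed by predicates below. -/
structure Network (X : Type) where
  V : Type
  arc : V → V → Prop
  root : V
  leaf : X → V

namespace Network

variable {X : Type} (N : Network X)

def parents (v : N.V) : Set N.V := {u | N.arc u v}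

def children (u : N.V) : Set N.V := {v | N.arc u v}

/-- in-degree 1, out-degree 2 -/
def IsTreeVertex (v : N.V) : Prop := (N.parents v).ncard = 1 ∧ (N.children v).ncard = 2

/-- in-degree 2, out-degree 1 -/
def IsRetic (v : N.V) : Prop := (N.parents v).ncard = 2 ∧ (N.children v).ncard = 1

/-- in-degree 1, out-degree 0 -/
def IsLeafVertex (v : N.V) : Prop := (N.parents v).ncard = 1 ∧ (N.children v).ncard = 0

def Acyclic : Prop := ∀ v : N.V, ¬ Relation.TransGen N.arc v v

/-- A well-formed binary phylogenetic network (non-degenerate case): a finite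
acyclic digraph with a root of in-degree 0 and out-degree 2, leaves of
in-degree 1 and out-degree 0 bijectively labelled by `X`, and all remaining
vertices tree vertices or reticulations. -/
def Wf : Prop :=
  Finite N.V ∧ N.Acyclic ∧
  (N.parents N.root).ncard = 0 ∧ (N.children N.root).ncard = 2 ∧
  Function.Injective N.leaf ∧
  (∀ x : X, N.IsLeafVertex (N.leaf x)) ∧
  (∀ v : N.V, v = N.root ∨ (∃ x, N.leaf x = v) ∨ N.IsTreeVertex v ∨ N.IsRetic v)

/-- The degenerate network on a single leaf: one vertex, no arcs. -/
def Degenerate : Prop :=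
  (∀ v : N.V, v = N.root) ∧ (∀ u v : N.V, ¬ N.arc u v) ∧
  (∃! _x : X, True) ∧ (∀ x : X, N.leaf x = N.root)

def IsBinaryPhylo : Prop := N.Wf ∨ N.Degenerate

/-- `l` is a directed path (a list of successively adjacent vertices) from `u` to `v`. -/
def IsPathFromTo (l : List N.V) (u v : N.V) : Prop :=
  l.Chain' N.arc ∧ l.head? = some u ∧ l.getLast? = some v

/-- `v` is a descendant of `u` (equivalently, `u` is an ancestor of `v`). -/
def Desc (u v : N.V) : Prop := Relation.ReflTransGen N.arc u v

/-- The visibility set of `u`: those leaf labels `x` such that every directed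
path from the root to the leaf labelled `x` traverses `u`. -/
def visSet (u : N.V) : Set X :=
  {x | ∀ l : List N.V, N.IsPathFromTo l N.root (N.leaf x) → u ∈ l}

/-- The cluster set of `u`: leaf labels of leaves that are descendants of `u`. -/
def cluster (u : N.V) : Set X := {x | N.Desc u (N.leaf x)}

/-- A tree path from `u` to `t`: a directed path whose vertices other than the
endpoints are tree vertices. -/
def IsTreePath (l : List N.V) (u t : N.V) : Prop :=
  N.IsPathFromTo l u t ∧ ∀ v ∈ l, v ≠ u → v ≠ t → N.IsTreeVertex v

/-- Tree-child: every vertex with a child has a child that is a tree vertex or a leaf. -/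
def TreeChild : Prop :=
  ∀ v : N.V, (∃ c, N.arc v c) → ∃ c, N.arc v c ∧ (N.IsTreeVertex c ∨ N.IsLeafVertex c)

/-- Some reticulation arc `(u,v)` is a shortcut: there is a directed path from
`u` to `v` avoiding the arc `(u,v)`. -/
def HasShortcut : Prop :=
  ∃ u v, N.arc u v ∧ N.IsRetic v ∧ ∃ w, N.arc u w ∧ w ≠ v ∧ N.Desc w v

/-- Normal: tree-child with no shortcuts. -/
def IsNormal : Prop := N.TreeChild ∧ ¬ N.HasShortcut

def SiblingRetics (u v : N.V) : Prop :=
  u ≠ v ∧ N.IsRetic u ∧ N.IsRetic v ∧ ∃ p, N.arc p u ∧ N.arc p v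

def StackRetics (u v : N.V) : Prop :=
  N.IsRetic u ∧ N.IsRetic v ∧ N.arc u v

/-- `u` and `v` are near-sibling reticulations: some tree vertex `t` has as its
two children `v` and a tree vertex `s` that is a parent of `u`. -/
def NearSiblingRetics (u v : N.V) : Prop :=
  u ≠ v ∧ N.IsRetic u ∧ N.IsRetic v ∧
  ∃ t s, N.IsTreeVertex t ∧ N.IsTreeVertex s ∧ N.arc t s ∧ N.arc t v ∧ N.arc s u

/-- `u` and `v` are near-stack reticulations: the child of `u` is a tree vertex
that is a parent of `v`. -/
def NearStackRetics (u v : N.V) : Prop :=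
  N.IsRetic u ∧ N.IsRetic v ∧ ∃ s, N.arc u s ∧ N.IsTreeVertex s ∧ N.arc s v

def NoNearRetics : Prop :=
  (∀ u v, ¬ N.NearSiblingRetics u v) ∧ (∀ u v, ¬ N.NearStackRetics u v)

/-- `{a,b}` is a cherry: the leaves labelled `a` and `b` share a parent. -/
def Cherry (a b : X) : Prop :=
  a ≠ b ∧ ∃ p, N.arc p (N.leaf a) ∧ N.arc p (N.leaf b)

/-- `{a,b}` is a reticulated cherry with reticulation leaf `b`. -/
def ReticCherry (a b : X) : Prop :=
  a ≠ b ∧ ∃ pa pb, N.arc pa (N.leaf a) ∧ N.arc pb (N.leaf b) ∧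
    N.IsRetic pb ∧ N.arc pa pb

/-- `N` displays the rooted triple `xy|z`: there is a subdigraph of `N` that
is a subdivision of the rooted triple tree with `z` adjacent to the root,
i.e. vertices `p` (the root image) and `q` (the image of the parent of `x,y`)
together with internally disjoint directed paths as below. -/
def Displays (x y z : X) : Prop :=
  x ≠ y ∧ x ≠ z ∧ y ≠ z ∧
  ∃ (p q : N.V) (l0 lx ly lz : List N.V),
    p ≠ q ∧
    N.IsPathFromTo l0 p q ∧
    N.IsPathFromTo lx q (N.leaf x) ∧
    N.IsPathFromTo ly q (N.leaf y) ∧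
    N.IsPathFromTo lz p (N.leaf z) ∧
    (∀ v ∈ lx, v ∈ ly → v = q) ∧
    (∀ v ∈ l0, v ∈ lx ∨ v ∈ ly → v = q) ∧
    (∀ v ∈ lz, v ∈ l0 ∨ v ∈ lx ∨ v ∈ ly → v = p)

/-- `R(N)`: the set of rooted triples displayed by `N`, encoded as ordered
triples `(x, y, z)` standing for `xy|z`. -/
def RDisp : Set (X × X × X) := {t | N.Displays t.1 t.2.1 t.2.2}

/-- Isomorphism of networks on the same leaf set: a digraph isomorphism fixing
each leaf label. -/
def Isomorphic (N1 N2 : Network X) : Prop :=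
  ∃ φ : N1.V ≃ N2.V,
    (∀ u v, N1.arc u v ↔ N2.arc (φ u) (φ v)) ∧ (∀ x, φ (N1.leaf x) = N2.leaf x)

/-- A candidate set for `b` (relative to `a`): a non-empty subset
`W ⊆ X - {a,b}` satisfying conditions (W1)–(W5). -/
def CandidateSet (a b : X) (W : Set X) : Prop :=
  W.Nonempty ∧ a ∉ W ∧ b ∉ W ∧
  -- (W1)
  (∀ c ∈ W, ∀ x : X, x ∉ W → x ≠ b →
    N.Displays b c x ∧ ¬ N.Displays a c b) ∧
  -- (W2)
  (∀ c ∈ W, ∀ c' ∈ W, c ≠ c' → ¬ N.Displays b c c') ∧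
  -- (W3)
  (∀ c ∈ W, ∀ x : X, x ∉ W → x ≠ a → x ≠ b →
    (N.Displays c x a ↔ N.Displays b x a)) ∧
  -- (W4)
  (∀ x y : X, x ∉ W → x ≠ a → x ≠ b → y ∉ W → y ≠ a → y ≠ b →
    N.Displays b x y → ¬ N.Displays a x y → ∀ c ∈ W, N.Displays c x y) ∧
  -- (W5)
  (∀ c ∈ W, (∀ x : X, x ∉ W → x ≠ a → x ≠ b → N.Displays a c x) →
    ∀ x : X, x ∉ W → x ≠ a → x ≠ b → ¬ N.Displays a x c ∧ ¬ N.Displays a x b)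

end Network

/-- A rooted binary phylogenetic `X`-tree: a binary phylogenetic network with no
reticulations. -/
def Network.IsPhyloTree {X : Type} (N : Network X) : Prop :=
  N.IsBinaryPhylo ∧ ∀ v : N.V, ¬ N.IsRetic v

/-!
In a tree, `xy|z` is displayed exactly when some vertex has `x` and `y` but not `z` below it.
Hence the clusters of a tree are exactly the nonempty sets `C` such that `ab|c` is displayed
whenever `a ≠ b` lie in `C` and `c ∉ C`, so the displayed triples determine the clusters. A tree
is the Hasse diagram of its clusters under inclusion, which gives the isomorphism.
-/

theorem wellFounded_of_finite_of_acyclic {V : Type} [Finite V] {r : V → V → Prop}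
    (h : ∀ v, ¬ Relation.TransGen r v v) : WellFounded r :=
  have : IsTrans V (Relation.TransGen r) := ⟨fun _ _ _ => Relation.TransGen.trans⟩
  have : Std.Irrefl (Relation.TransGen r) := ⟨h⟩
  Subrelation.wf Relation.TransGen.single (Finite.wellFounded_of_trans_of_irrefl _)

namespace Network

variable {X : Type}

section Paths

variable {N : Network X} {l : List N.V} {u v t : N.V}

theorem IsPathFromTo.desc_of_mem (h : N.IsPathFromTo l u t) (hv : v ∈ l) :
    N.Desc u v ∧ N.Desc v t := by
  obtain ⟨hchain, hhead, hlast⟩ := h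
  refine ⟨hchain.induction (N.Desc u ·) l (fun _ _ hab hua => hua.tail hab) ?_ v hv,
    hchain.backwards_induction (N.Desc · t) l (fun _ _ hab hbt => hbt.head hab) ?_ v hv⟩
  · intro hne
    rw [(List.head_eq_iff_head?_eq_some hne).2 hhead]
    exact .refl
  · intro hne
    rw [Option.some.inj ((List.getLast?_eq_some_getLast hne).symm.trans hlast)]
    exact .refl

theorem IsPathFromTo.last_mem (h : N.IsPathFromTo l u t) : t ∈ l :=
  List.mem_of_getLast? h.2.2

theorem IsPathFromTo.desc (h : N.IsPathFromTo l u t) : N.Desc u t :=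
  (h.desc_of_mem h.last_mem).1

theorem exists_isPathFromTo_of_desc (h : N.Desc u v) : ∃ l, N.IsPathFromTo l u v := by
  obtain ⟨l, hchain, hlast⟩ := List.exists_isChain_cons_of_relationReflTransGen h
  exact ⟨u :: l, hchain, rfl, by rw [List.getLast?_eq_some_getLast (List.cons_ne_nil _ _), hlast]⟩

theorem IsPathFromTo.map {N' : Network X} {f : N.V → N'.V}
    (hf : ∀ a b, N.arc a b → N'.arc (f a) (f b)) (h : N.IsPathFromTo l u t) :
    N'.IsPathFromTo (l.map f) (f u) (f t) := by
  obtain ⟨hchain, hhead, hlast⟩ := h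
  exact ⟨(List.isChain_map f).2 (hchain.imp hf), by simp [hhead], by simp [hlast]⟩

end Paths

theorem mem_cluster_iff {N : Network X} {q : N.V} {x : X} :
    x ∈ N.cluster q ↔ q = N.leaf x ∨ ∃ c, N.arc q c ∧ x ∈ N.cluster c :=
  Relation.ReflTransGen.cases_head_iff

theorem cluster_subset_of_desc {N : Network X} {u v : N.V} (h : N.Desc u v) :
    N.cluster v ⊆ N.cluster u :=
  fun _ hx => h.trans hx

theorem Isomorphic.symm {N₁ N₂ : Network X} (h : N₁.Isomorphic N₂) : N₂.Isomorphic N₁ := by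
  obtain ⟨φ, harc, hleaf⟩ := h
  refine ⟨φ.symm, fun u v => ?_, fun x => φ.symm_apply_eq.2 (hleaf x).symm⟩
  rw [harc, φ.apply_symm_apply, φ.apply_symm_apply]

theorem Isomorphic.displays {N₁ N₂ : Network X} (h : N₁.Isomorphic N₂) {x y z : X}
    (hd : N₁.Displays x y z) : N₂.Displays x y z := by
  obtain ⟨φ, harc, hleaf⟩ := h
  obtain ⟨hxy, hxz, hyz, p, q, l0, lx, ly, lz, hpq, h0, hx, hy, hz, hxy', h0', hz'⟩ := hd
  have hmap := fun {l a b} (hl : N₁.IsPathFromTo l a b) =>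
    hl.map (f := φ) fun u v => (harc u v).1
  refine ⟨hxy, hxz, hyz, φ p, φ q, l0.map φ, lx.map φ, ly.map φ, lz.map φ, φ.injective.ne hpq,
    hmap h0, hleaf x ▸ hmap hx, hleaf y ▸ hmap hy, hleaf z ▸ hmap hz, ?_⟩
  simp only [List.forall_mem_map, List.mem_map_of_injective φ.injective, φ.injective.eq_iff]
  exact ⟨hxy', h0', hz'⟩

theorem Isomorphic.rDisp_eq {N₁ N₂ : Network X} (h : N₁.Isomorphic N₂) : N₁.RDisp = N₂.RDisp :=
  Set.ext fun _ => ⟨h.displays, h.symm.displays⟩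

def CovByIn (S : Set (Set X)) (B A : Set X) : Prop :=
  B ⊂ A ∧ ∀ C ∈ S, B ⊂ C → ¬ C ⊂ A

/-- `N` is the Hasse diagram of its clusters under inclusion. -/
def IsClusterHasse (N : Network X) : Prop :=
  Function.Injective N.cluster ∧ (∀ x, N.cluster (N.leaf x) = {x}) ∧
    ∀ u v, N.arc u v ↔ CovByIn (Set.range N.cluster) (N.cluster v) (N.cluster u)

theorem IsClusterHasse.isomorphic {N₁ N₂ : Network X} (h₁ : N₁.IsClusterHasse)
    (h₂ : N₂.IsClusterHasse) (hrange : Set.range N₁.cluster = Set.range N₂.cluster) :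
    N₁.Isomorphic N₂ := by
  let φ : N₁.V ≃ N₂.V := (Equiv.ofInjective _ h₁.1).trans
    ((Equiv.setCongr hrange).trans (Equiv.ofInjective _ h₂.1).symm)
  have hφ : ∀ v, N₂.cluster (φ v) = N₁.cluster v := fun v => by
    simp [φ, Equiv.apply_ofInjective_symm]
  refine ⟨φ, fun u v => ?_, fun x => h₂.1 ?_⟩
  · rw [h₁.2.2, h₂.2.2, hφ, hφ, hrange]
  · rw [hφ, h₁.2.1, h₂.2.1]

def clustersOfTriples (R : Set (X × X × X)) : Set (Set X) :=
  {C | C.Nonempty ∧ ∀ a ∈ C, ∀ b ∈ C, a ≠ b → ∀ c ∉ C, (a, b, c) ∈ R}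

variable {T : Network X}

namespace Wf

variable (hT : T.Wf)
include hT

theorem wellFounded_arc : WellFounded T.arc :=
  have := hT.1
  wellFounded_of_finite_of_acyclic hT.2.1

theorem wellFounded_swap_arc : WellFounded (Function.swap T.arc) :=
  have := hT.1
  wellFounded_of_finite_of_acyclic fun v h => hT.2.1 v (Relation.transGen_swap.1 h)

theorem desc_antisymm {u v : T.V} (huv : T.Desc u v) (hvu : T.Desc v u) : u = v := by
  rcases Relation.reflTransGen_iff_eq_or_transGen.1 huv with rfl | h
  · rfl
  · exact absurd (h.trans_left hvu) (hT.2.1 u)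

theorem not_arc_leaf (x : X) (v : T.V) : ¬ T.arc (T.leaf x) v := fun h =>
  have := hT.1
  Set.eq_empty_iff_forall_notMem.1 ((Set.ncard_eq_zero (Set.toFinite _)).1 (hT.2.2.2.2.2.1 x).2) v h

theorem ne_root_of_arc {u v : T.V} (h : T.arc u v) : v ≠ T.root := by
  have := hT.1
  rintro rfl
  exact Set.eq_empty_iff_forall_notMem.1 ((Set.ncard_eq_zero (Set.toFinite _)).1 hT.2.2.1) u h

theorem cluster_leaf (x : X) : T.cluster (T.leaf x) = {x} := by
  ext y
  refine ⟨fun h => ?_, fun h => h ▸ .refl⟩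
  rcases Relation.ReflTransGen.cases_head_iff.1 h with h | ⟨c, hc, -⟩
  · exact hT.2.2.2.2.1 h.symm
  · exact absurd hc (hT.not_arc_leaf x c)

variable (hNR : ∀ v : T.V, ¬ T.IsRetic v)
include hNR

theorem ncard_parents_eq_one {v : T.V} (hv : v ≠ T.root) : (T.parents v).ncard = 1 := by
  rcases hT.2.2.2.2.2.2 v with rfl | ⟨x, rfl⟩ | htree | hretic
  · exact absurd rfl hv
  · exact (hT.2.2.2.2.2.1 x).1
  · exact htree.1
  · exact absurd hretic (hNR v)

theorem ncard_children_eq_two {v : T.V} (hv : ∀ x, T.leaf x ≠ v) :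
    (T.children v).ncard = 2 := by
  rcases hT.2.2.2.2.2.2 v with rfl | ⟨x, rfl⟩ | htree | hretic
  · exact hT.2.2.2.1
  · exact absurd rfl (hv x)
  · exact htree.2
  · exact absurd hretic (hNR v)

theorem exists_arc_of_ne_root {v : T.V} (hv : v ≠ T.root) : ∃ u, T.arc u v := by
  obtain ⟨u, hu⟩ := Set.ncard_eq_one.1 (hT.ncard_parents_eq_one hNR hv)
  exact ⟨u, show u ∈ T.parents v by simp [hu]⟩

theorem eq_of_arc_of_arc {u u' v : T.V} (h : T.arc u v) (h' : T.arc u' v) : u = u' := by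
  obtain ⟨w, hw⟩ := Set.ncard_eq_one.1 (hT.ncard_parents_eq_one hNR (hT.ne_root_of_arc h))
  have hu : u ∈ T.parents v := h
  have hu' : u' ∈ T.parents v := h'
  simp only [hw, Set.mem_singleton_iff] at hu hu'
  rw [hu, hu']

theorem desc_of_transGen_of_arc {w u v : T.V} (hwv : Relation.TransGen T.arc w v)
    (huv : T.arc u v) : T.Desc w u := by
  obtain ⟨p, hwp, hpv⟩ := Relation.TransGen.tail'_iff.1 hwv
  exact hT.eq_of_arc_of_arc hNR hpv huv ▸ hwp

theorem root_desc (v : T.V) : T.Desc T.root v := by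
  induction v using hT.wellFounded_arc.induction with
  | _ v ih =>
    by_cases hv : v = T.root
    · exact hv ▸ .refl
    · obtain ⟨u, hu⟩ := hT.exists_arc_of_ne_root hNR hv
      exact (ih u hu).tail hu

theorem desc_total {u v w : T.V} (hu : T.Desc u w) (hv : T.Desc v w) :
    T.Desc u v ∨ T.Desc v u := by
  induction w using hT.wellFounded_arc.induction generalizing u v with
  | _ w ih =>
    rcases Relation.reflTransGen_iff_eq_or_transGen.1 hu with rfl | hu'
    · exact .inr hv
    obtain ⟨p, hup, hpw⟩ := Relation.TransGen.tail'_iff.1 hu'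
    rcases Relation.reflTransGen_iff_eq_or_transGen.1 hv with rfl | hv'
    · exact .inl hu
    exact ih p hpw hup (hT.desc_of_transGen_of_arc hNR hv' hpw)

theorem cluster_nonempty (v : T.V) : (T.cluster v).Nonempty := by
  induction v using hT.wellFounded_swap_arc.induction with
  | _ v ih =>
    by_cases hv : ∃ x, T.leaf x = v
    · obtain ⟨x, rfl⟩ := hv
      exact ⟨x, .refl⟩
    · push Not at hv
      obtain ⟨c, hc⟩ : (T.children v).Nonempty :=
        Set.nonempty_of_ncard_ne_zero (by rw [hT.ncard_children_eq_two hNR hv]; decide)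
      exact (ih c hc).mono (cluster_subset_of_desc (.single hc))

theorem exists_sibling {v c : T.V} (hc : T.arc v c) :
    ∃ c', T.arc v c' ∧ c' ≠ c ∧ T.cluster v ⊆ T.cluster c ∪ T.cluster c' := by
  have := hT.1
  have hv : ∀ x, T.leaf x ≠ v := fun x hx => hT.not_arc_leaf x c (hx ▸ hc)
  obtain ⟨c', hc'⟩ : ∃ c', T.children v \ {c} = {c'} := by
    rw [← Set.ncard_eq_one, Set.ncard_sdiff_singleton_of_mem (show c ∈ T.children v from hc),
      hT.ncard_children_eq_two hNR hv]
  have hmem : c' ∈ T.children v \ {c} := hc'.symm ▸ rfl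
  refine ⟨c', hmem.1, hmem.2, fun x hx => ?_⟩
  rcases mem_cluster_iff.1 hx with h | ⟨d, hd, hxd⟩
  · exact absurd h.symm (hv x)
  by_cases hdc : d = c
  · exact .inl (hdc ▸ hxd)
  · have : d ∈ T.children v \ {c} := ⟨hd, hdc⟩
    rw [hc', Set.mem_singleton_iff] at this
    exact .inr (this ▸ hxd)

theorem disjoint_cluster_of_arc {p c c' : T.V} (hc : T.arc p c) (hc' : T.arc p c')
    (hne : c ≠ c') : Disjoint (T.cluster c) (T.cluster c') := by
  have not_desc : ∀ {d d'}, T.arc p d → T.arc p d' → d ≠ d' → ¬ T.Desc d d' :=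
    fun hd hd' hne hdd' => hT.2.1 p <| Relation.TransGen.head' hd <|
      hT.desc_of_transGen_of_arc hNR
        ((Relation.reflTransGen_iff_eq_or_transGen.1 hdd').resolve_left hne.symm) hd'
  refine Set.disjoint_left.2 fun x hx hx' => ?_
  rcases hT.desc_total hNR hx hx' with h | h
  · exact not_desc hc hc' hne h
  · exact not_desc hc' hc hne.symm h

theorem cluster_ssubset_of_transGen {u v : T.V} (h : Relation.TransGen T.arc u v) :
    T.cluster v ⊂ T.cluster u := by
  obtain ⟨c, huc, hcv⟩ := Relation.TransGen.head'_iff.1 h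
  obtain ⟨c', huc', hc'c, -⟩ := hT.exists_sibling hNR huc
  obtain ⟨y, hy⟩ := hT.cluster_nonempty hNR c'
  have hvc : T.cluster v ⊆ T.cluster c := cluster_subset_of_desc hcv
  refine (Set.ssubset_iff_of_subset (hvc.trans (cluster_subset_of_desc (.single huc)))).2
    ⟨y, cluster_subset_of_desc (.single huc') hy, fun hyv => ?_⟩
  exact Set.disjoint_left.1 (hT.disjoint_cluster_of_arc hNR huc huc' hc'c.symm) (hvc hyv) hy

theorem desc_iff_cluster_subset {u v : T.V} : T.Desc u v ↔ T.cluster v ⊆ T.cluster u := by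
  refine ⟨cluster_subset_of_desc, fun hvu => ?_⟩
  obtain ⟨x, hx⟩ := hT.cluster_nonempty hNR v
  rcases hT.desc_total hNR (hvu hx) hx with huv | hvu'
  · exact huv
  rcases Relation.reflTransGen_iff_eq_or_transGen.1 hvu' with rfl | htrans
  · exact .refl
  · exact absurd hvu (hT.cluster_ssubset_of_transGen hNR htrans).not_subset

theorem cluster_injective : Function.Injective T.cluster := fun _ _ h =>
  hT.desc_antisymm ((hT.desc_iff_cluster_subset hNR).2 h.ge)
    ((hT.desc_iff_cluster_subset hNR).2 h.le)

theorem transGen_iff_cluster_ssubset {u v : T.V} :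
    Relation.TransGen T.arc u v ↔ T.cluster v ⊂ T.cluster u := by
  refine ⟨hT.cluster_ssubset_of_transGen hNR, fun h => ?_⟩
  rcases Relation.reflTransGen_iff_eq_or_transGen.1 ((hT.desc_iff_cluster_subset hNR).2 h.le)
    with rfl | huv
  · exact absurd rfl h.ne
  · exact huv

theorem arc_iff_covByIn {u v : T.V} :
    T.arc u v ↔ CovByIn (Set.range T.cluster) (T.cluster v) (T.cluster u) := by
  refine ⟨fun huv => ⟨hT.cluster_ssubset_of_transGen hNR (.single huv), ?_⟩, ?_⟩
  · rintro _ ⟨w, rfl⟩ hvw hwu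
    have hwu' := hT.desc_of_transGen_of_arc hNR ((hT.transGen_iff_cluster_ssubset hNR).2 hvw) huv
    exact hwu.not_subset ((hT.desc_iff_cluster_subset hNR).1 hwu')
  · rintro ⟨hvu, hcov⟩
    obtain ⟨c, huc, hcv⟩ :=
      Relation.TransGen.head'_iff.1 ((hT.transGen_iff_cluster_ssubset hNR).2 hvu)
    rcases Relation.reflTransGen_iff_eq_or_transGen.1 hcv with rfl | hcv
    · exact huc
    · exact absurd (hT.cluster_ssubset_of_transGen hNR (.single huc))
        (hcov _ ⟨c, rfl⟩ (hT.cluster_ssubset_of_transGen hNR hcv))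

theorem exists_lca {S : Set T.V} (hS : S.Nonempty) :
    ∃ q, (∀ t ∈ S, T.Desc q t) ∧ ∀ w, (∀ t ∈ S, T.Desc w t) → T.Desc w q := by
  obtain ⟨q, hq, hdeepest⟩ := hT.wellFounded_swap_arc.has_min {w | ∀ t ∈ S, T.Desc w t}
    ⟨T.root, fun t _ => hT.root_desc hNR t⟩
  refine ⟨q, hq, fun w hw => ?_⟩
  obtain ⟨t, ht⟩ := hS
  rcases hT.desc_total hNR (hw t ht) (hq t ht) with hwq | hqw
  · exact hwq
  rcases Relation.ReflTransGen.cases_head_iff.1 hqw with rfl | ⟨c, hqc, hcw⟩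
  · exact .refl
  · exact absurd hqc (hdeepest c fun t' ht' => hcw.trans (hw t' ht'))

theorem mem_of_isPathFromTo {l : List T.V} {u t w : T.V} (hl : T.IsPathFromTo l u t)
    (huw : T.Desc u w) (hwt : T.Desc w t) : w ∈ l := by
  induction l generalizing u with
  | nil => exact absurd hl.2.1 (by simp)
  | cons a l ih =>
    obtain ⟨hchain, hhead, hlast⟩ := hl
    obtain rfl : a = u := by simpa using hhead
    rcases eq_or_ne w a with rfl | hwa
    · exact List.mem_cons_self
    cases l with
    | nil =>
      obtain rfl : a = t := by simpa using hlast
      exact absurd (hT.desc_antisymm hwt huw) hwa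
    | cons b l =>
      obtain ⟨hab, hchain⟩ := List.isChain_cons_cons.1 hchain
      have htail : T.IsPathFromTo (b :: l) b t := ⟨hchain, rfl, by simpa using hlast⟩
      have hbw : T.Desc b w := by
        rcases hT.desc_total hNR htail.desc hwt with hbw | hwb
        · exact hbw
        rcases Relation.reflTransGen_iff_eq_or_transGen.1 hwb with rfl | hwb
        · exact .refl
        · exact absurd (hT.desc_antisymm (hT.desc_of_transGen_of_arc hNR hwb hab) huw) hwa
      exact List.mem_cons_of_mem _ (ih htail hbw)

theorem exists_cluster_of_displays {x y z : X} (h : T.Displays x y z) :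
    ∃ v, x ∈ T.cluster v ∧ y ∈ T.cluster v ∧ z ∉ T.cluster v := by
  obtain ⟨-, -, -, p, q, l0, lx, ly, lz, hpq, h0, hx, hy, hz, -, -, hlz⟩ := h
  refine ⟨q, hx.desc, hy.desc, fun hqz => hpq ?_⟩
  exact (hlz q (hT.mem_of_isPathFromTo hNR hz h0.desc hqz) (.inl h0.last_mem)).symm

/-- The embedding is through the lowest common ancestors `q` of `x, y` and `p` of `q, z`. -/
theorem displays_of_mem_cluster {x y z : X} {v : T.V} (hxy : x ≠ y) (hx : x ∈ T.cluster v)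
    (hy : y ∈ T.cluster v) (hz : z ∉ T.cluster v) : T.Displays x y z := by
  obtain ⟨q, hq, hqmax⟩ := hT.exists_lca hNR (S := {T.leaf x, T.leaf y}) (by simp)
  simp only [Set.mem_insert_iff, Set.mem_singleton_iff, forall_eq_or_imp, forall_eq] at hq hqmax
  have hqz : ¬ T.Desc q (T.leaf z) := fun h => hz ((hqmax v ⟨hx, hy⟩).trans h)
  obtain ⟨p, hp, hpmax⟩ := hT.exists_lca hNR (S := {q, T.leaf z}) (by simp)
  simp only [Set.mem_insert_iff, Set.mem_singleton_iff, forall_eq_or_imp, forall_eq] at hp hpmax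
  obtain ⟨l0, h0⟩ := exists_isPathFromTo_of_desc hp.1
  obtain ⟨lx, hlx⟩ := exists_isPathFromTo_of_desc hq.1
  obtain ⟨ly, hly⟩ := exists_isPathFromTo_of_desc hq.2
  obtain ⟨lz, hlz⟩ := exists_isPathFromTo_of_desc hp.2
  refine ⟨hxy, fun e => hz (e ▸ hx), fun e => hz (e ▸ hy), p, q, l0, lx, ly, lz,
    fun e => hqz (e ▸ hp.2), h0, hlx, hly, hlz, ?_, ?_, ?_⟩
  · intro w hwx hwy
    obtain ⟨hqw, hwx⟩ := hlx.desc_of_mem hwx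
    exact hT.desc_antisymm (hqmax w ⟨hwx, (hly.desc_of_mem hwy).2⟩) hqw
  · rintro w hw0 (hwx | hwy)
    · exact hT.desc_antisymm (h0.desc_of_mem hw0).2 (hlx.desc_of_mem hwx).1
    · exact hT.desc_antisymm (h0.desc_of_mem hw0).2 (hly.desc_of_mem hwy).1
  · rintro w hwz (hw0 | hwx | hwy)
    · obtain ⟨hpw, hwz⟩ := hlz.desc_of_mem hwz
      exact hT.desc_antisymm (hpmax w ⟨(h0.desc_of_mem hw0).2, hwz⟩) hpw
    · exact absurd ((hlx.desc_of_mem hwx).1.trans (hlz.desc_of_mem hwz).2) hqz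
    · exact absurd ((hly.desc_of_mem hwy).1.trans (hlz.desc_of_mem hwz).2) hqz

theorem not_displays_swap {x y z : X} (h : T.Displays x y z) : ¬ T.Displays x z y := by
  obtain ⟨v, hxv, hyv, hzv⟩ := hT.exists_cluster_of_displays hNR h
  intro h'
  obtain ⟨w, hxw, hzw, hyw⟩ := hT.exists_cluster_of_displays hNR h'
  rcases hT.desc_total hNR hxv hxw with hvw | hwv
  · exact hzv (cluster_subset_of_desc hvw hzw)
  · exact hyw (cluster_subset_of_desc hwv hyv)

/-- If `d ∈ cluster q \ C` lies below the child `c` of `q`, then some `b ∈ C` lies below `c`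
and some `a ∈ C` does not, so the tree displays `bd|a`, contradicting `ba|d`. -/
theorem cluster_subset_of_displays {C : Set X} {q : T.V} (hC : C.Nonempty)
    (hdisp : ∀ a ∈ C, ∀ b ∈ C, a ≠ b → ∀ c ∉ C, T.Displays a b c) (hCq : C ⊆ T.cluster q)
    (hq : ∀ c, T.arc q c → ¬ C ⊆ T.cluster c) : T.cluster q ⊆ C := by
  intro d hd
  by_contra hdC
  rcases mem_cluster_iff.1 hd with rfl | ⟨c, hqc, hdc⟩
  · obtain ⟨a, ha⟩ := hC
    have had : a = d := by simpa [hT.cluster_leaf] using hCq ha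
    exact hdC (had ▸ ha)
  obtain ⟨c', hqc', -, hsplit⟩ := hT.exists_sibling hNR hqc
  obtain ⟨a, haC, hac⟩ := Set.not_subset.1 (hq c hqc)
  obtain ⟨b, hbC, hbc'⟩ := Set.not_subset.1 (hq c' hqc')
  have hbc : b ∈ T.cluster c := (hsplit (hCq hbC)).resolve_right hbc'
  have hba : b ≠ a := fun e => hac (e ▸ hbc)
  have hbd : b ≠ d := fun e => hdC (e ▸ hbC)
  exact hT.not_displays_swap hNR (hdisp b hbC a haC hba d hdC)
    (hT.displays_of_mem_cluster hNR hbd hbc hdc hac)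

theorem range_cluster : Set.range T.cluster = clustersOfTriples T.RDisp := by
  ext C
  refine ⟨?_, fun ⟨hC, hdisp⟩ => ?_⟩
  · rintro ⟨v, rfl⟩
    exact ⟨hT.cluster_nonempty hNR v, fun a ha b hb hab c hc =>
      hT.displays_of_mem_cluster hNR hab ha hb hc⟩
  obtain ⟨q, hCq, hqmax⟩ := hT.exists_lca hNR (hC.image T.leaf)
  simp only [Set.forall_mem_image] at hCq hqmax
  refine ⟨q, (hT.cluster_subset_of_displays hNR hC hdisp hCq fun c hqc hCc => ?_).antisymm hCq⟩
  exact hT.2.1 q (Relation.TransGen.head' hqc (hqmax c hCc))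

theorem isClusterHasse : T.IsClusterHasse :=
  ⟨hT.cluster_injective hNR, hT.cluster_leaf, fun _ _ => hT.arc_iff_covByIn hNR⟩

end Wf

namespace Degenerate

variable (hT : T.Degenerate)
include hT

theorem subsingleton : Subsingleton X :=
  ⟨fun _ _ => hT.2.2.1.unique trivial trivial⟩

theorem cluster_eq_univ (v : T.V) : T.cluster v = Set.univ :=
  Set.eq_univ_of_forall fun x => by
    change T.Desc v (T.leaf x)
    rw [hT.1 v, hT.2.2.2 x]
    exact .refl

theorem range_cluster : Set.range T.cluster = clustersOfTriples T.RDisp := by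
  have := hT.subsingleton
  have : Nonempty T.V := ⟨T.root⟩
  rw [funext hT.cluster_eq_univ, Set.range_const]
  obtain ⟨x, -⟩ := hT.2.2.1
  ext C
  refine ⟨fun h => ?_, fun h => Set.mem_singleton_iff.2 h.1.eq_univ⟩
  rw [Set.mem_singleton_iff.1 h]
  exact ⟨⟨x, trivial⟩, fun a _ b _ hab => absurd (Subsingleton.elim a b) hab⟩

theorem isClusterHasse : T.IsClusterHasse := by
  have := hT.subsingleton
  refine ⟨fun u v _ => (hT.1 u).trans (hT.1 v).symm, fun x => ?_, fun u v => ?_⟩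
  · rw [hT.cluster_eq_univ]
    exact (Set.eq_singleton_iff_unique_mem.2 ⟨trivial, fun y _ => Subsingleton.elim y x⟩)
  · refine iff_of_false (hT.2.1 u v) fun h => h.1.ne ?_
    rw [hT.cluster_eq_univ, hT.cluster_eq_univ]

end Degenerate

theorem IsPhyloTree.isClusterHasse (hT : T.IsPhyloTree) : T.IsClusterHasse :=
  hT.1.elim (fun hW => hW.isClusterHasse hT.2) Degenerate.isClusterHasse

theorem IsPhyloTree.range_cluster (hT : T.IsPhyloTree) :
    Set.range T.cluster = clustersOfTriples T.RDisp :=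
  hT.1.elim (fun hW => hW.range_cluster hT.2) Degenerate.range_cluster

end Network

/-- Two rooted binary phylogenetic `X`-trees display the same set of rooted
triples if and only if they are isomorphic. -/
theorem triples_determine_trees {X : Type} (T1 T2 : Network X)
    (h1 : T1.IsPhyloTree) (h2 : T2.IsPhyloTree) :
    T1.RDisp = T2.RDisp ↔ T1.Isomorphic T2 := by
  refine ⟨fun h => h1.isClusterHasse.isomorphic h2.isClusterHasse ?_, Network.Isomorphic.rDisp_eq⟩
  rw [h1.range_cluster, h2.range_cluster, h]
end

section
/- Let N be a binary phylogenetic network. Then the following are equivalent: (i) N is tree-child; (ii) every vertex of N is visible; (iii) N has no sibling reticulations and no stack reticulations. -/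
/-!
In a tree-child network every vertex `v` reaches a leaf `x` through vertices whose only parent
is their predecessor; a root path to `x` must therefore climb back through all of them to `v`,
so `v` is visible.

Conversely, the parent `p` of two sibling reticulations and a reticulation `u` whose child is a
reticulation are invisible: every child of such a vertex has a second parent from which it is
reached without touching the vertex (acyclicity prevents both second parents of the siblings from
lying below `p`), and every leaf below the vertex lies below one of its children.

Finally, a non-leaf vertex all of whose children are reticulations either is a reticulation with a
reticulation child or has two reticulation children.
-/

theorem List.IsChain.exists_rel_of_mem {α : Type*} {r : α → α → Prop} {l : List α}
    (h : l.IsChain r) {w : α} (hw : w ∈ l) (hhead : l.head? ≠ some w) : ∃ u ∈ l, r u w := by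
  obtain ⟨s, t, rfl⟩ := List.append_of_mem hw
  rcases s.eq_nil_or_concat with rfl | ⟨s, u, rfl⟩
  · simp at hhead
  · exact ⟨u, by simp,
      List.isChain_iff_forall_rel_of_append_cons_cons.mp h (l₁ := s) (l₂ := t) (by simp)⟩

theorem wellFounded_transGen_of_finite {α : Type*} [Finite α] {r : α → α → Prop}
    (h : ∀ a, ¬ Relation.TransGen r a a) : WellFounded (Relation.TransGen r) :=
  have : IsTrans α (Relation.TransGen r) := ⟨fun _ _ _ => .trans⟩
  have : Std.Irrefl (Relation.TransGen r) := ⟨h⟩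
  Finite.wellFounded_of_trans_of_irrefl _

namespace Network

variable {X : Type} {N : Network X}

theorem Acyclic.not_desc_of_arc (hN : N.Acyclic) {u v : N.V} (h : N.arc u v) :
    ¬ N.Desc v u :=
  fun hvu => hN u (Relation.TransGen.head' h hvu)

theorem Acyclic.ne_of_arc (hN : N.Acyclic) {u v : N.V} (h : N.arc u v) : u ≠ v := by
  rintro rfl
  exact hN.not_desc_of_arc h .refl

theorem Desc.exists_arc_of_ne {u v : N.V} (h : N.Desc u v) (hne : u ≠ v) :
    ∃ c, N.arc u c ∧ N.Desc c v :=
  h.cases_head.resolve_left hne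

theorem parents_eq_singleton {u v : N.V} (h : N.arc u v) (hv : (N.parents v).ncard = 1) :
    N.parents v = {u} := by
  obtain ⟨a, ha⟩ := Set.ncard_eq_one.mp hv
  have hu : u ∈ N.parents v := h
  rw [ha] at hu ⊢
  rw [Set.mem_singleton_iff.mp hu]

theorem IsRetic.exists_arc_ne {v : N.V} (hv : N.IsRetic v) (u : N.V) :
    ∃ w, N.arc w v ∧ w ≠ u := by
  have : 1 < (N.parents v).ncard := by rw [hv.1]; norm_num
  exact Set.exists_ne_of_one_lt_ncard this u

theorem IsRetic.eq_of_arc {u v w : N.V} (hu : N.IsRetic u) (hv : N.arc u v) (hw : N.arc u w) :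
    w = v := by
  obtain ⟨a, ha⟩ := Set.ncard_eq_one.mp hu.2
  have hv' : v ∈ N.children u := hv
  have hw' : w ∈ N.children u := hw
  rw [ha] at hv' hw'
  exact hw'.trans hv'.symm

def ReachAvoiding (N : Network X) (p a b : N.V) : Prop :=
  a ≠ p ∧ Relation.ReflTransGen (fun u v => N.arc u v ∧ v ≠ p) a b

theorem ReachAvoiding.trans {p a b c : N.V} (hab : N.ReachAvoiding p a b)
    (hbc : N.ReachAvoiding p b c) : N.ReachAvoiding p a c :=
  ⟨hab.1, hab.2.trans hbc.2⟩

theorem reachAvoiding_of_arc {p a b : N.V} (h : N.arc a b) (ha : a ≠ p) (hb : b ≠ p) :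
    N.ReachAvoiding p a b :=
  ⟨ha, .single ⟨h, hb⟩⟩

theorem reachAvoiding_of_desc {p a b : N.V} (h : N.Desc a b)
    (hp : ¬ (N.Desc a p ∧ N.Desc p b)) : N.ReachAvoiding p a b := by
  induction h with
  | refl => exact ⟨fun hap => hp ⟨hap ▸ .refl, hap ▸ .refl⟩, .refl⟩
  | @tail c b hac hcb ih =>
    obtain ⟨ha, hreach⟩ := ih fun hpc => hp ⟨hpc.1, hpc.2.tail hcb⟩
    exact ⟨ha, hreach.tail ⟨hcb, fun hbp => hp ⟨hbp ▸ hac.tail hcb, hbp ▸ .refl⟩⟩⟩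

theorem notMem_visSet_of_reachAvoiding {p : N.V} {x : X}
    (h : N.ReachAvoiding p N.root (N.leaf x)) : x ∉ N.visSet p := by
  obtain ⟨l, hchain, hlast⟩ := List.exists_isChain_cons_of_relationReflTransGen h.2
  have hp : ∀ v ∈ N.root :: l, v ≠ p :=
    hchain.induction _ _ (fun _ _ hxy _ => hxy.2) fun _ => h.1
  intro hx
  refine hp p (hx _ ⟨hchain.imp fun _ _ hxy => hxy.1, rfl, ?_⟩) rfl
  rw [List.getLast?_eq_some_getLast (List.cons_ne_nil _ _), hlast]

theorem mem_visSet_of_soleParent {v : N.V} {x : X} (hroot : ∀ u, ¬ N.arc u N.root)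
    (h : Relation.ReflTransGen (fun u w => N.parents w = {u}) v (N.leaf x)) :
    x ∈ N.visSet v := by
  induction h using Relation.ReflTransGen.head_induction_on with
  | refl => exact fun l hl => List.mem_of_getLast? hl.2.2
  | @head u c huc _ ih =>
    intro l hl
    have hc_root : l.head? ≠ some c := by
      rw [hl.2.1]
      rintro ⟨⟩
      exact hroot u (huc ▸ rfl : u ∈ N.parents N.root)
    obtain ⟨w, hw, hwc⟩ := hl.1.exists_rel_of_mem (ih l hl) hc_root
    have : w ∈ N.parents c := hwc
    rw [huc] at this
    rwa [← Set.mem_singleton_iff.mp this]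

namespace Wf

variable (hN : N.Wf)
include hN

theorem finite : Finite N.V := hN.1

theorem acyclic : N.Acyclic := hN.2.1

theorem ncard_children_root : (N.children N.root).ncard = 2 := hN.2.2.2.1

theorem isLeafVertex_leaf (x : X) : N.IsLeafVertex (N.leaf x) := hN.2.2.2.2.2.1 x

theorem vertex_cases (v : N.V) :
    v = N.root ∨ (∃ x, N.leaf x = v) ∨ N.IsTreeVertex v ∨ N.IsRetic v :=
  hN.2.2.2.2.2.2 v

theorem not_arc_root (u : N.V) : ¬ N.arc u N.root := fun h =>
  have := hN.finite
  Set.ncard_eq_zero (Set.toFinite _) |>.mp hN.2.2.1 |>.subset h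

theorem not_arc_leaf_s1 (x : X) (c : N.V) : ¬ N.arc (N.leaf x) c := fun h =>
  have := hN.finite
  Set.ncard_eq_zero (Set.toFinite _) |>.mp (hN.isLeafVertex_leaf x).2 |>.subset h

theorem desc_root (v : N.V) : N.Desc N.root v := by
  have := hN.finite
  induction v using (wellFounded_transGen_of_finite hN.acyclic).induction with
  | _ v ih =>
    by_cases hv : v = N.root
    · exact hv ▸ .refl
    · obtain ⟨u, hu⟩ : (N.parents v).Nonempty := by
        refine Set.nonempty_of_ncard_ne_zero ?_
        rcases hN.vertex_cases v with h | ⟨x, rfl⟩ | h | h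
        · exact absurd h hv
        · rw [(hN.isLeafVertex_leaf x).1]; simp
        · rw [h.1]; simp
        · rw [h.1]; simp
      exact (ih u (.single hu)).tail hu

theorem leaf_or_exists_arc (v : N.V) : (∃ x, N.leaf x = v) ∨ ∃ c, N.arc v c := by
  have := hN.finite
  have hpos : ∀ n, (N.children v).ncard = n + 1 → ∃ c, N.arc v c := fun n hn =>
    Set.nonempty_of_ncard_ne_zero (s := N.children v) (by omega)
  rcases hN.vertex_cases v with rfl | hleaf | h | h
  · exact .inr (hpos 1 hN.ncard_children_root)
  · exact .inl hleaf
  · exact .inr (hpos 1 h.2)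
  · exact .inr (hpos 0 h.2)

theorem exists_soleParent_reach_leaf (hTC : N.TreeChild) (v : N.V) :
    ∃ x, Relation.ReflTransGen (fun u w => N.parents w = {u}) v (N.leaf x) := by
  have := hN.finite
  have hwf := wellFounded_transGen_of_finite (r := Function.swap N.arc)
    fun a h => hN.acyclic a (Relation.transGen_swap.mp h)
  induction v using hwf.induction with
  | _ v ih =>
    rcases hN.leaf_or_exists_arc v with ⟨x, rfl⟩ | hchild
    · exact ⟨x, .refl⟩
    obtain ⟨c, hvc, hc⟩ := hTC v hchild
    obtain ⟨x, hcx⟩ := ih c (.single hvc)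
    have hc_parents : (N.parents c).ncard = 1 := hc.elim (·.1) (·.1)
    exact ⟨x, .head (parents_eq_singleton hvc hc_parents) hcx⟩

theorem visSet_nonempty_of_treeChild (hTC : N.TreeChild) (v : N.V) : (N.visSet v).Nonempty :=
  let ⟨x, hx⟩ := hN.exists_soleParent_reach_leaf hTC v
  ⟨x, mem_visSet_of_soleParent hN.not_arc_root hx⟩

theorem ncard_children_le_two (v : N.V) : (N.children v).ncard ≤ 2 := by
  rcases hN.vertex_cases v with rfl | ⟨x, rfl⟩ | h | h
  · exact hN.ncard_children_root.le
  · rw [(hN.isLeafVertex_leaf x).2]; omega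
  · exact h.2.le
  · rw [h.2]; omega

theorem eq_or_eq_of_arc {p u v c : N.V} (hu : N.arc p u) (hv : N.arc p v) (huv : u ≠ v)
    (hc : N.arc p c) : c = u ∨ c = v := by
  have := hN.finite
  have hsub : {u, v} ⊆ N.children p := by
    rintro w (rfl | rfl)
    exacts [hu, hv]
  have hle : (N.children p).ncard ≤ ({u, v} : Set N.V).ncard := by
    rw [Set.ncard_pair huv]; exact hN.ncard_children_le_two p
  have hc' : c ∈ N.children p := hc
  rwa [← Set.eq_of_subset_of_ncard_le hsub hle] at hc'

theorem visSet_eq_empty_of_reachAvoiding {p c₀ : N.V} (hc₀ : N.arc p c₀)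
    (h : ∀ c, N.arc p c → N.ReachAvoiding p N.root c) : N.visSet p = ∅ := by
  refine Set.eq_empty_of_forall_notMem fun x => ?_
  by_cases hpx : N.Desc p (N.leaf x)
  · have hp_leaf : p ≠ N.leaf x := by
      rintro rfl
      exact hN.not_arc_leaf_s1 x c₀ hc₀
    obtain ⟨c, hpc, hcx⟩ := hpx.exists_arc_of_ne hp_leaf
    exact notMem_visSet_of_reachAvoiding <| (h c hpc).trans <|
      reachAvoiding_of_desc hcx fun hcp => hN.acyclic.not_desc_of_arc hpc hcp.1
  · exact notMem_visSet_of_reachAvoiding <|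
      reachAvoiding_of_desc (hN.desc_root _) fun hp => hpx hp.2

theorem reachAvoiding_of_arc_of_not_desc {p q c : N.V} (hqc : N.arc q c) (hqp : q ≠ p)
    (hcp : c ≠ p) (hpq : ¬ N.Desc p q) : N.ReachAvoiding p N.root c :=
  (reachAvoiding_of_desc (hN.desc_root q) fun h => hpq h.2).trans
    (reachAvoiding_of_arc hqc hqp hcp)

theorem visSet_eq_empty_of_stackRetics {u v : N.V} (h : N.StackRetics u v) :
    N.visSet u = ∅ := by
  obtain ⟨hu, hv, huv⟩ := h
  obtain ⟨q, hqv, hqu⟩ := hv.exists_arc_ne u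
  have hvq : ¬ N.Desc u q := fun huq => by
    obtain ⟨c, huc, hcq⟩ := huq.exists_arc_of_ne hqu.symm
    exact hN.acyclic.not_desc_of_arc hqv (hu.eq_of_arc huv huc ▸ hcq)
  refine hN.visSet_eq_empty_of_reachAvoiding huv fun c huc => ?_
  rw [hu.eq_of_arc huv huc]
  exact hN.reachAvoiding_of_arc_of_not_desc hqv hqu (hN.acyclic.ne_of_arc huv).symm hvq

theorem desc_other_child_of_desc_of_arc {p u v q : N.V} (hu : N.arc p u) (hv : N.arc p v)
    (huv : u ≠ v) (hqu : N.arc q u) (hqp : q ≠ p) (hpq : N.Desc p q) : N.Desc v q := by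
  obtain ⟨c, hpc, hcq⟩ := hpq.exists_arc_of_ne hqp.symm
  rcases hN.eq_or_eq_of_arc hu hv huv hpc with rfl | rfl
  · exact absurd hcq (hN.acyclic.not_desc_of_arc hqu)
  · exact hcq

theorem visSet_eq_empty_of_siblingRetics_of_not_desc {p u v q : N.V} (hu : N.arc p u)
    (hv : N.arc p v) (huv : u ≠ v) (hvr : N.IsRetic v) (hqu : N.arc q u) (hqp : q ≠ p)
    (hpq : ¬ N.Desc p q) : N.visSet p = ∅ := by
  have hup : u ≠ p := (hN.acyclic.ne_of_arc hu).symm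
  have hvp : v ≠ p := (hN.acyclic.ne_of_arc hv).symm
  have hreach_u := hN.reachAvoiding_of_arc_of_not_desc hqu hqp hup hpq
  have hreach_v : N.ReachAvoiding p N.root v := by
    obtain ⟨r, hrv, hrp⟩ := hvr.exists_arc_ne p
    by_cases hpr : N.Desc p r
    · have hur := hN.desc_other_child_of_desc_of_arc hv hu huv.symm hrv hrp hpr
      exact hreach_u.trans <| (reachAvoiding_of_desc hur fun h =>
        hN.acyclic.not_desc_of_arc hu h.1).trans (reachAvoiding_of_arc hrv hrp hvp)
    · exact hN.reachAvoiding_of_arc_of_not_desc hrv hrp hvp hpr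
  refine hN.visSet_eq_empty_of_reachAvoiding hu fun c hc => ?_
  rcases hN.eq_or_eq_of_arc hu hv huv hc with rfl | rfl
  exacts [hreach_u, hreach_v]

theorem visSet_eq_empty_of_siblingRetics {p u v : N.V} (huv : N.SiblingRetics u v)
    (hu : N.arc p u) (hv : N.arc p v) : N.visSet p = ∅ := by
  obtain ⟨hne, hur, hvr, -⟩ := huv
  obtain ⟨q, hqu, hqp⟩ := hur.exists_arc_ne p
  obtain ⟨r, hrv, hrp⟩ := hvr.exists_arc_ne p
  by_cases hpq : N.Desc p q
  · by_cases hpr : N.Desc p r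
    · -- `v ⇝ q → u ⇝ r → v` would be a cycle
      have hvq := hN.desc_other_child_of_desc_of_arc hu hv hne hqu hqp hpq
      have hur := hN.desc_other_child_of_desc_of_arc hv hu hne.symm hrv hrp hpr
      exact absurd (hvq.tail hqu |>.trans hur) (hN.acyclic.not_desc_of_arc hrv)
    · exact hN.visSet_eq_empty_of_siblingRetics_of_not_desc hv hu hne.symm hur hrv hrp hpr
  · exact hN.visSet_eq_empty_of_siblingRetics_of_not_desc hu hv hne hvr hqu hqp hpq

theorem isRetic_of_arc {v c : N.V} (hvc : N.arc v c) (hc : ¬ N.IsTreeVertex c)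
    (hc' : ¬ N.IsLeafVertex c) : N.IsRetic c := by
  rcases hN.vertex_cases c with rfl | ⟨x, rfl⟩ | h | h
  · exact absurd hvc (hN.not_arc_root v)
  · exact absurd (hN.isLeafVertex_leaf x) hc'
  · exact absurd h hc
  · exact h

theorem isRetic_or_exists_two_children {v c : N.V} (hvc : N.arc v c) :
    N.IsRetic v ∨ ∃ c₁ c₂, c₁ ≠ c₂ ∧ N.arc v c₁ ∧ N.arc v c₂ := by
  have two_children : (N.children v).ncard = 2 → ∃ c₁ c₂, c₁ ≠ c₂ ∧ N.arc v c₁ ∧ N.arc v c₂ :=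
    fun h2 => by
      obtain ⟨c₁, c₂, hne, hch⟩ := Set.ncard_eq_two.mp h2
      refine ⟨c₁, c₂, hne, ?_, ?_⟩ <;> show _ ∈ N.children v <;> simp [hch]
  rcases hN.vertex_cases v with rfl | ⟨x, rfl⟩ | h | h
  · exact .inr (two_children hN.ncard_children_root)
  · exact absurd hvc (hN.not_arc_leaf_s1 x c)
  · exact .inr (two_children h.2)
  · exact .inl h

theorem treeChild_of_forall_not_siblingRetics_stackRetics
    (hsib : ∀ u v, ¬ N.SiblingRetics u v) (hstack : ∀ u v, ¬ N.StackRetics u v) :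
    N.TreeChild := by
  rintro v ⟨c₀, hc₀⟩
  by_contra! hno
  have hretic : ∀ c, N.arc v c → N.IsRetic c := fun c hc =>
    hN.isRetic_of_arc hc (hno c hc).1 (hno c hc).2
  rcases hN.isRetic_or_exists_two_children hc₀ with hv | ⟨c₁, c₂, hne, h₁, h₂⟩
  · exact hstack v c₀ ⟨hv, hretic c₀ hc₀, hc₀⟩
  · exact hsib c₁ c₂ ⟨hne, hretic c₁ h₁, hretic c₂ h₂, v, h₁, h₂⟩

end Wf

namespace Degenerate

variable (hD : N.Degenerate)
include hD

theorem treeChild : N.TreeChild := fun v ⟨c, hc⟩ => absurd hc (hD.2.1 v c)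

theorem visSet_nonempty (v : N.V) : (N.visSet v).Nonempty := by
  obtain ⟨x, -⟩ := hD.2.2.1.exists
  refine ⟨x, fun l hl => ?_⟩
  rw [hD.1 v]
  exact List.mem_of_mem_head? hl.2.1

theorem not_siblingRetics (u v : N.V) : ¬ N.SiblingRetics u v :=
  fun ⟨_, _, _, p, hpu, _⟩ => hD.2.1 p u hpu

theorem not_stackRetics (u v : N.V) : ¬ N.StackRetics u v :=
  fun h => hD.2.1 u v h.2.2

end Degenerate

end Network

/-- For a binary phylogenetic network `N`, the following are equivalent:
(i) `N` is tree-child; (ii) every vertex of `N` is visible; (iii) `N` has no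
sibling reticulations and no stack reticulations. -/
theorem treechild_characterisation {X : Type} (N : Network X)
    (h : N.IsBinaryPhylo) :
    (N.TreeChild ↔ ∀ v : N.V, (N.visSet v).Nonempty) ∧
    (N.TreeChild ↔
      (∀ u v : N.V, ¬ N.SiblingRetics u v) ∧ (∀ u v : N.V, ¬ N.StackRetics u v)) := by
  have tc_vis : N.TreeChild → ∀ v : N.V, (N.visSet v).Nonempty := fun hTC =>
    h.elim (·.visSet_nonempty_of_treeChild hTC) (·.visSet_nonempty)
  have vis_no : (∀ v : N.V, (N.visSet v).Nonempty) →
      (∀ u v : N.V, ¬ N.SiblingRetics u v) ∧ (∀ u v : N.V, ¬ N.StackRetics u v) := by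
    intro hvis
    rcases h with hN | hD
    · refine ⟨fun u v huv => ?_, fun u v huv => ?_⟩
      · obtain ⟨p, hu, hv⟩ := huv.2.2.2
        exact (hvis p).ne_empty (hN.visSet_eq_empty_of_siblingRetics huv hu hv)
      · exact (hvis u).ne_empty (hN.visSet_eq_empty_of_stackRetics huv)
    · exact ⟨hD.not_siblingRetics, hD.not_stackRetics⟩
  have no_tc : (∀ u v : N.V, ¬ N.SiblingRetics u v) ∧ (∀ u v : N.V, ¬ N.StackRetics u v) →
      N.TreeChild := fun ⟨hsib, hstack⟩ =>
    h.elim (·.treeChild_of_forall_not_siblingRetics_stackRetics hsib hstack) (·.treeChild)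
  exact ⟨⟨tc_vis, no_tc ∘ vis_no⟩, ⟨vis_no ∘ tc_vis, no_tc⟩⟩
end

section
/- Let N be a binary tree-child network on X with |X| >= 2. Then N contains either a cherry or a reticulated cherry. -/
/-- A binary tree-child network on `X` with `|X| ≥ 2` contains a cherry or a
reticulated cherry. -/
theorem treechild_has_cherry_or_retic_cherry {X : Type} (N : Network X)
    (h : N.IsBinaryPhylo) (htc : N.TreeChild) (hX : ∃ a b : X, a ≠ b) :
    (∃ a b : X, N.Cherry a b) ∨ (∃ a b : X, N.ReticCherry a b) := by
  classical
  rcases h with hwf | hdeg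
  · obtain ⟨hfin, hacyc, hrin, hrout, hinj, hleafv, hclass⟩ := hwf
    haveI : Finite N.V := hfin
    -- the root has no parents
    have hpe : N.parents N.root = ∅ := (Set.ncard_eq_zero (Set.toFinite _)).mp hrin
    have hnoparent_root : ∀ u, ¬ N.arc u N.root := by
      intro u hu
      have : u ∈ N.parents N.root := hu
      rw [hpe] at this
      exact this
    -- leaf vertices have no children
    have hleaf_nochild : ∀ v, N.IsLeafVertex v → ∀ c, ¬ N.arc v c := by
      intro v hv c hc
      have he : N.children v = ∅ := (Set.ncard_eq_zero (Set.toFinite _)).mp hv.2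
      have : c ∈ N.children v := hc
      rw [he] at this
      exact this
    -- well-foundedness of the reverse reachability order
    haveI : IsTrans N.V (fun a b => Relation.TransGen N.arc b a) :=
      ⟨fun _ _ _ h1 h2 => h2.trans h1⟩
    haveI : IsIrrefl N.V (fun a b => Relation.TransGen N.arc b a) :=
      ⟨fun a ha => hacyc a ha⟩
    have hwf' := Finite.wellFounded_of_trans_of_irrefl
      (fun a b : N.V => Relation.TransGen N.arc b a)
    -- T: vertices of out-degree 2
    set T : Set N.V := {v | (N.children v).ncard = 2} with hT
    have hrootT : N.root ∈ T := hrout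
    obtain ⟨m, hmT, hmax⟩ := hwf'.has_min T ⟨N.root, hrootT⟩
    have hm2 : (N.children m).ncard = 2 := hmT
    -- classification of children of m
    have key : ∀ c, N.arc m c → (∃ x, N.leaf x = c) ∨ N.IsRetic c := by
      intro c hc
      rcases hclass c with h1 | h2 | h3 | h4
      · exact absurd (h1 ▸ hc) (hnoparent_root m)
      · exact Or.inl h2
      · exact absurd (Relation.TransGen.single hc) (hmax c h3.2)
      · exact Or.inr h4
    obtain ⟨c1, c2, hc12, hcs⟩ := Set.ncard_eq_two.mp hm2
    have harc1 : N.arc m c1 := by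
      have : c1 ∈ N.children m := by rw [hcs]; exact Set.mem_insert _ _
      exact this
    have harc2 : N.arc m c2 := by
      have : c2 ∈ N.children m := by rw [hcs]; exact Set.mem_insert_of_mem _ rfl
      exact this
    -- tree-child at m gives a leaf child c0
    obtain ⟨c0, hc0arc, hc0type⟩ := htc m ⟨c1, harc1⟩
    have hc0leaf : N.IsLeafVertex c0 := by
      rcases hc0type with htv | hlv
      · exact absurd (Relation.TransGen.single hc0arc) (hmax c0 htv.2)
      · exact hlv
    obtain ⟨a, ha⟩ : ∃ x, N.leaf x = c0 := by
      rcases key c0 hc0arc with hx | hr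
      · exact hx
      · exact absurd hc0leaf.2 (by rw [hr.2]; norm_num)
    -- the other child c'
    have hother : ∃ c', N.arc m c' ∧ c' ≠ c0 := by
      have hc0mem : c0 ∈ ({c1, c2} : Set N.V) := by rw [← hcs]; exact hc0arc
      rcases hc0mem with h | h
      · exact ⟨c2, harc2, by rw [h]; exact hc12.symm⟩
      · exact ⟨c1, harc1, by rw [h]; exact hc12⟩
    obtain ⟨c', hc'arc, hc'ne⟩ := hother
    rcases key c' hc'arc with ⟨x, hx⟩ | hret
    · -- cherry
      left
      refine ⟨a, x, ?_, m, by rw [ha]; exact hc0arc, by rw [hx]; exact hc'arc⟩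
      intro hax
      exact hc'ne (by rw [← hx, ← hax, ha])
    · -- reticulated cherry: c' is a reticulation
      right
      obtain ⟨d, hd⟩ := Set.ncard_eq_one.mp hret.2
      have harcd : N.arc c' d := by
        have : d ∈ N.children c' := by rw [hd]; exact rfl
        exact this
      -- tree-child at c'
      obtain ⟨e, hearc, hetype⟩ := htc c' ⟨d, harcd⟩
      have hed : e = d := by
        have : e ∈ N.children c' := hearc
        rw [hd] at this
        exact this
      subst hed
      have hdleaf : N.IsLeafVertex e := by
        rcases hetype with htv | hlv
        · exact absurd (Relation.TransGen.head hc'arc (Relation.TransGen.single hearc))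
            (hmax e htv.2)
        · exact hlv
      obtain ⟨b, hb⟩ : ∃ x, N.leaf x = e := by
        rcases hclass e with h1 | h2 | h3 | h4
        · exact absurd (h1 ▸ hearc) (hnoparent_root c')
        · exact h2
        · exact absurd hdleaf.2 (by rw [h3.2]; norm_num)
        · exact absurd hdleaf.2 (by rw [h4.2]; norm_num)
      refine ⟨a, b, ?_, m, c', by rw [ha]; exact hc0arc, by rw [hb]; exact hearc,
        hret, hc'arc⟩
      -- a ≠ b
      intro hab
      have hmc' : m ≠ c' := by
        intro hmc
        have := hret.2
        rw [← hmc] at this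
        rw [hm2] at this
        norm_num at this
      have h1 : m ∈ N.parents (N.leaf a) := by
        show N.arc m (N.leaf a); rw [ha]; exact hc0arc
      have h2 : c' ∈ N.parents (N.leaf a) := by
        show N.arc c' (N.leaf a); rw [hab, hb]; exact hearc
      obtain ⟨p, hp⟩ := Set.ncard_eq_one.mp (hleafv a).1
      rw [hp] at h1 h2
      exact hmc' (h1.trans h2.symm)
  · -- degenerate case is impossible since |X| ≥ 2
    obtain ⟨aa, bb, hab⟩ := hX
    obtain ⟨_, _, ⟨x, _, hx⟩, _⟩ := hdeg
    exact absurd ((hx aa trivial).trans (hx bb trivial).symm) hab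
end

section
/- Let N be a binary normal network on X with reticulated cherry {a,b} (reticulation leaf b), and let g_b be the grandparent of b not equal to the parent of a. If N displays bx|y but does not display ax|y, where x, y are in X - (V_{g_b} ∪ {a,b}), then N displays cx|y for all c in V_{g_b}. -/
/-!
Fix an embedding of `bx|y`. Its branch to `b` ends with `g → p_b → b`, where `g` is one of the
two parents `p_a`, `g_b` of `p_b`. If `g = p_a`, ending that branch with `p_a → a` instead embeds
`ax|y`, which is excluded. If `g = g_b`, let `π` be the part after `g_b` of a root path to
`c ∈ V_{g_b}`. Being strictly below `g_b`, `π` misses the path from the embedding's root `p` to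
its cherry vertex `q`; and since every root path to `c` passes `g_b`, a vertex of `π` on the branch
from `p` to `y` would put `g_b` above `p`, a cycle. If `π` meets the branch to `x`, its last vertex
there becomes the new cherry vertex, with the rest of `π` as the branch to `c`; otherwise `π`
replaces the branch to `b` below `g_b`.
-/

theorem List.exists_eq_append_cons_last {α : Type*} (P : α → Prop) (l : List α)
    (h : ∃ w ∈ l, P w) : ∃ l₁ w l₂, l = l₁ ++ w :: l₂ ∧ P w ∧ ∀ v ∈ l₂, ¬ P v := by
  induction l with
  | nil => simp at h
  | cons a l ih =>
    by_cases hl : ∃ w ∈ l, P w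
    · obtain ⟨l₁, w, l₂, rfl, hw, hl₂⟩ := ih hl
      exact ⟨a :: l₁, w, l₂, rfl, hw, hl₂⟩
    · push Not at hl
      obtain ⟨w, hw, hPw⟩ := h
      rcases List.mem_cons.1 hw with rfl | hw
      · exact ⟨[], w, l, rfl, hPw, hl⟩
      · exact absurd hPw (hl w hw)

theorem Set.eq_or_eq_of_ncard_eq_two {α : Type*} {s : Set α} {a b c : α} (hs : s.ncard = 2)
    (ha : a ∈ s) (hb : b ∈ s) (hab : a ≠ b) (hc : c ∈ s) : c = a ∨ c = b := by
  obtain ⟨x, y, -, rfl⟩ := Set.ncard_eq_two.1 hs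
  simp only [Set.mem_insert_iff, Set.mem_singleton_iff] at ha hb hc
  grind

theorem Set.eq_of_mem_of_ncard_eq_one {α : Type*} {s : Set α} {a b : α} (hs : s.ncard = 1)
    (ha : a ∈ s) (hb : b ∈ s) : a = b := by
  obtain ⟨x, rfl⟩ := Set.ncard_eq_one.1 hs
  exact ha.trans hb.symm

open Relation

namespace Network

variable {X : Type}

structure TripleEmbedding (N : Network X) (x y z : X) : Type where
  p : N.V
  q : N.V
  l0 : List N.V
  lx : List N.V
  ly : List N.V
  lz : List N.V
  p_ne_q : p ≠ q
  path0 : N.IsPathFromTo l0 p q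
  pathx : N.IsPathFromTo lx q (N.leaf x)
  pathy : N.IsPathFromTo ly q (N.leaf y)
  pathz : N.IsPathFromTo lz p (N.leaf z)
  inter_xy : ∀ v ∈ lx, v ∈ ly → v = q
  inter_0 : ∀ v ∈ l0, v ∈ lx ∨ v ∈ ly → v = q
  inter_z : ∀ v ∈ lz, v ∈ l0 ∨ v ∈ lx ∨ v ∈ ly → v = p

variable {N : Network X}

theorem displays_iff {x y z : X} :
    N.Displays x y z ↔ x ≠ y ∧ x ≠ z ∧ y ≠ z ∧ Nonempty (N.TripleEmbedding x y z) := by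
  constructor
  · rintro ⟨hxy, hxz, hyz, p, q, l0, lx, ly, lz, hpq, h0, hx, hy, hz, hixy, hi0, hiz⟩
    exact ⟨hxy, hxz, hyz, ⟨⟨p, q, l0, lx, ly, lz, hpq, h0, hx, hy, hz, hixy, hi0, hiz⟩⟩⟩
  · rintro ⟨hxy, hxz, hyz, ⟨e⟩⟩
    exact ⟨hxy, hxz, hyz, e.p, e.q, e.l0, e.lx, e.ly, e.lz, e.p_ne_q, e.path0, e.pathx, e.pathy,
      e.pathz, e.inter_xy, e.inter_0, e.inter_z⟩

namespace IsPathFromTo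

variable {l l₁ l₂ : List N.V} {u v w : N.V}

theorem eq_cons (h : N.IsPathFromTo l u v) : l = u :: l.tail := by
  obtain ⟨-, hh, -⟩ := h
  cases l <;> simp_all

theorem head_mem (h : N.IsPathFromTo l u v) : u ∈ l := by
  rw [h.eq_cons]; exact List.mem_cons_self

theorem last_mem_s8 (h : N.IsPathFromTo l u v) : v ∈ l := List.mem_of_getLast? h.2.2

theorem pairwise (h : N.IsPathFromTo l u v) : l.Pairwise (TransGen N.arc) :=
  (h.1.imp fun _ _ => TransGen.single).pairwise

theorem transGen_of_mem (h : N.IsPathFromTo (u :: l) u v) (hw : w ∈ l) : TransGen N.arc u w :=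
  List.rel_of_pairwise_cons h.pairwise hw

theorem reflTransGen (h : N.IsPathFromTo l u v) : ReflTransGen N.arc u v := by
  have hc := h.1
  have hl := h.2.2
  rw [h.eq_cons] at hc hl
  exact List.relationReflTransGen_of_exists_isChain_cons _ hc
    (by rw [List.getLast?_eq_some_getLast (List.cons_ne_nil _ _)] at hl; exact Option.some.inj hl)

theorem split (h : N.IsPathFromTo l u v) (hl : l = l₁ ++ w :: l₂) :
    N.IsPathFromTo (l₁ ++ [w]) u w ∧ N.IsPathFromTo (w :: l₂) w v := by
  obtain ⟨hc, hh, hv⟩ := h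
  subst hl
  refine ⟨⟨hc.prefix ⟨l₂, by simp⟩, ?_, by simp⟩, ⟨hc.suffix ⟨l₁, rfl⟩, rfl, ?_⟩⟩
  · cases l₁ <;> simpa using hh
  · rw [List.getLast?_append, List.getLast?_cons] at hv
    rw [List.getLast?_cons]
    simpa using hv

theorem append (h₁ : N.IsPathFromTo l₁ u v) (h₂ : N.IsPathFromTo l₂ v w) :
    N.IsPathFromTo (l₁ ++ l₂.tail) u w := by
  obtain ⟨hc₁, hh₁, hl₁⟩ := h₁
  have hc₂ := h₂.1
  have hl₂ := h₂.2.2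
  rw [h₂.eq_cons] at hc₂ hl₂
  refine ⟨List.IsChain.append hc₁ hc₂.tail ?_, ?_, ?_⟩
  · rw [hl₁]
    rintro _ ⟨⟩ y hy
    exact List.isChain_cons.1 hc₂ |>.1 y hy
  · cases l₁ <;> simp_all
  · rw [List.getLast?_cons] at hl₂
    rw [List.getLast?_append]
    cases ht : l₂.tail.getLast? <;> simp_all

theorem reflTransGen_of_mem (h : N.IsPathFromTo l u v) (hw : w ∈ l) :
    ReflTransGen N.arc u w ∧ ReflTransGen N.arc w v := by
  obtain ⟨l₁, l₂, hl⟩ := List.append_of_mem hw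
  exact ⟨(h.split hl).1.reflTransGen, (h.split hl).2.reflTransGen⟩

theorem exists_arc_of_mem (h : N.IsPathFromTo l u v) (hw : w ∈ l) (hwu : w ≠ u) :
    ∃ g ∈ l, N.arc g w := by
  obtain ⟨l₁, l₂, rfl⟩ := List.append_of_mem hw
  rcases List.eq_nil_or_concat l₁ with rfl | ⟨l₃, g, rfl⟩
  · exact absurd (by simpa using h.2.1) hwu
  · refine ⟨g, by simp, List.isChain_pair.1 (h.1.infix ⟨l₃, l₂, by simp⟩)⟩

end IsPathFromTo

namespace Wf

theorem acyclic_s8 (hN : N.Wf) : N.Acyclic := hN.2.1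

theorem not_arc_leaf_s8 (hN : N.Wf) (a : X) (v : N.V) : ¬ N.arc (N.leaf a) v := by
  have : Finite N.V := hN.1
  exact Set.eq_empty_iff_forall_notMem.1
    ((Set.ncard_eq_zero (Set.toFinite _)).1 (hN.2.2.2.2.2.1 a).2) v

theorem eq_of_reflTransGen_leaf (hN : N.Wf) {a b : X}
    (h : ReflTransGen N.arc (N.leaf a) (N.leaf b)) : a = b := by
  rcases h.cases_head with h | ⟨v, hv, -⟩
  · exact hN.2.2.2.2.1 h
  · exact absurd hv (hN.not_arc_leaf_s8 a v)

theorem eq_of_leaf_mem (hN : N.Wf) {l : List N.V} {u : N.V} {a b : X}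
    (hl : N.IsPathFromTo l u (N.leaf b)) (ha : N.leaf a ∈ l) : a = b :=
  hN.eq_of_reflTransGen_leaf (hl.reflTransGen_of_mem ha).2

theorem eq_of_arc_leaf (hN : N.Wf) {u v : N.V} {a : X} (hu : N.arc u (N.leaf a))
    (hv : N.arc v (N.leaf a)) : u = v :=
  Set.eq_of_mem_of_ncard_eq_one (hN.2.2.2.2.2.1 a).1 hu hv

theorem reflTransGen_root (hN : N.Wf) (v : N.V) : ReflTransGen N.arc N.root v := by
  obtain ⟨hfin, hac, -, -, -, hleaf, hcases⟩ := hN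
  have : Std.Irrefl (TransGen N.arc) := ⟨hac⟩
  induction v using (Finite.wellFounded_of_trans_of_irrefl (TransGen N.arc)).induction with
  | _ v ih =>
  by_cases hv : v = N.root
  · exact hv ▸ .refl
  have hpar : (N.parents v).ncard ≠ 0 := by
    rcases hcases v with h | ⟨x, rfl⟩ | h | h
    exacts [absurd h hv, by simp [(hleaf x).1], by simp [h.1], by simp [h.1]]
  obtain ⟨u, hu⟩ := Set.nonempty_of_ncard_ne_zero hpar
  exact (ih u (.single hu)).tail hu

theorem exists_path_from_root (hN : N.Wf) (v : N.V) : ∃ l, N.IsPathFromTo l N.root v := by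
  obtain ⟨l, hc, hl⟩ := List.exists_isChain_cons_of_relationReflTransGen (hN.reflTransGen_root v)
  exact ⟨N.root :: l, hc, rfl, by rw [List.getLast?_eq_some_getLast (List.cons_ne_nil _ _), hl]⟩

theorem reflTransGen_or_mem_of_mem_visSet (hN : N.Wf) {g u : N.V} {c : X} {l : List N.V}
    (hc : c ∈ N.visSet g) (hl : N.IsPathFromTo l u (N.leaf c)) :
    ReflTransGen N.arc g u ∨ g ∈ l := by
  obtain ⟨σ, hσ⟩ := hN.exists_path_from_root u
  rcases List.mem_append.1 (hc _ (hσ.append hl)) with h | h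
  · exact .inl (hσ.reflTransGen_of_mem h).2
  · exact .inr (List.mem_of_mem_tail h)

theorem exists_mem_arc_of_unique_child (hN : N.Wf) {l : List N.V} {u r : N.V} {b x : X}
    (hl : N.IsPathFromTo l u (N.leaf b)) (hr : N.arc r (N.leaf b)) (hr₁ : (N.children r).ncard = 1)
    (hux : ReflTransGen N.arc u (N.leaf x)) (hxb : x ≠ b) : ∃ g ∈ l, N.arc g r := by
  have hub : N.leaf b ≠ u := fun h => hxb (hN.eq_of_reflTransGen_leaf (h ▸ hux)).symm
  obtain ⟨r', hr'l, hr'⟩ := hl.exists_arc_of_mem hl.last_mem_s8 hub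
  obtain rfl := hN.eq_of_arc_leaf hr' hr
  refine hl.exists_arc_of_mem hr'l fun hru => ?_
  rcases (hru ▸ hux).cases_head with hrx | ⟨v, hv, hvx⟩
  · exact hN.not_arc_leaf_s8 x _ (hrx ▸ hr)
  · obtain rfl := Set.eq_of_mem_of_ncard_eq_one hr₁ hv hr
    exact hxb (hN.eq_of_reflTransGen_leaf hvx).symm

end Wf

theorem IsBinaryPhylo.wf_of_ne (h : N.IsBinaryPhylo) {x y : X} (hxy : x ≠ y) : N.Wf :=
  h.resolve_right fun hd => by
    obtain ⟨_, -, huniq⟩ := hd.2.2.1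
    exact hxy ((huniq x trivial).trans (huniq y trivial).symm)

namespace TripleEmbedding

variable {x y z x' : X} (e : N.TripleEmbedding x y z)

theorem transGen_p_q : TransGen N.arc e.p e.q :=
  (reflTransGen_iff_eq_or_transGen.1 e.path0.reflTransGen).resolve_left e.p_ne_q.symm

theorem notMem_l0 (hac : N.Acyclic) {w v : N.V} (hw : ReflTransGen N.arc e.q w)
    (hv : TransGen N.arc w v) : v ∉ e.l0 := fun hv0 =>
  hac w (hv.trans_left ((e.path0.reflTransGen_of_mem hv0).2.trans hw))

def branchFromX (hac : N.Acyclic) {w : N.V} {l₁ l₂ t : List N.V} (hlx : e.lx = l₁ ++ w :: l₂)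
    (ht : N.IsPathFromTo (w :: t) w (N.leaf x')) (hty : ∀ v ∈ t, v ∉ e.ly)
    (htz : ∀ v ∈ t, v ∉ e.lz) : N.TripleEmbedding x' y z :=
  have hmem : ∀ v ∈ l₁ ++ w :: t, v ∈ e.lx ∨ v ∈ t := by
    intro v hv; rw [hlx]; simp only [List.mem_append, List.mem_cons] at hv ⊢; tauto
  have hqw : ReflTransGen N.arc e.q w := (e.pathx.reflTransGen_of_mem (by simp [hlx])).1
  { p := e.p, q := e.q, l0 := e.l0, lx := l₁ ++ w :: t, ly := e.ly, lz := e.lz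
    p_ne_q := e.p_ne_q
    path0 := e.path0
    pathx := by simpa using (e.pathx.split hlx).1.append ht
    pathy := e.pathy
    pathz := e.pathz
    inter_xy := fun v hv hvy => (hmem v hv).elim (e.inter_xy v · hvy) (absurd hvy <| hty v ·)
    inter_0 := by
      rintro v hv0 (hv | hv)
      · exact (hmem v hv).elim (e.inter_0 v hv0 <| .inl ·)
          (absurd hv0 <| e.notMem_l0 hac hqw <| ht.transGen_of_mem ·)
      · exact e.inter_0 v hv0 (.inr hv)
    inter_z := by
      rintro v hvz (hv | hv | hv)
      · exact e.inter_z v hvz (.inl hv)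
      · exact (hmem v hv).elim (e.inter_z v hvz <| .inr <| .inl ·) (absurd hvz <| htz v ·)
      · exact e.inter_z v hvz (.inr (.inr hv)) }

/-- The cherry vertex moves down to `w`; the old `x`-branch is dropped. -/
def branchFromY (hac : N.Acyclic) {w : N.V} {l₁ l₂ t : List N.V} (hly : e.ly = l₁ ++ w :: l₂)
    (ht : N.IsPathFromTo (w :: t) w (N.leaf x')) (hty : ∀ v ∈ t, v ∉ e.ly)
    (htz : ∀ v ∈ t, v ∉ e.lz) : N.TripleEmbedding x' y z :=
  have hsplit := e.pathy.split hly
  have hwy : w ∈ e.ly := by simp [hly]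
  have hy₁ : ∀ v ∈ l₁ ++ [w], v ∈ e.ly := by
    intro v; rw [hly]; simp only [List.mem_append, List.mem_cons, List.not_mem_nil]; tauto
  have hy₂ : ∀ v ∈ w :: l₂, v ∈ e.ly := by
    intro v; rw [hly]; simp only [List.mem_append, List.mem_cons]; tauto
  have hmem0 : ∀ v ∈ e.l0 ++ (l₁ ++ [w]).tail, v ∈ e.l0 ∨ v ∈ l₁ ++ [w] := fun v hv =>
    (List.mem_append.1 hv).imp_right List.mem_of_mem_tail
  { p := e.p, q := w, l0 := e.l0 ++ (l₁ ++ [w]).tail, lx := w :: t, ly := w :: l₂, lz := e.lz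
    p_ne_q := fun hpw => e.p_ne_q (e.inter_0 _ e.path0.head_mem (.inr (hpw ▸ hwy)))
    path0 := e.path0.append hsplit.1
    pathx := ht
    pathy := hsplit.2
    pathz := e.pathz
    inter_xy := by
      rintro v (_ | ⟨_, hv⟩) hv'
      · rfl
      · exact absurd (hy₂ v hv') (hty v hv)
    inter_0 := by
      intro v hv0 hv
      by_contra hvw
      have hwv : TransGen N.arc w v := by
        rcases hv with (_ | ⟨_, hv⟩) | (_ | ⟨_, hv⟩)
        exacts [absurd rfl hvw, ht.transGen_of_mem hv, absurd rfl hvw, hsplit.2.transGen_of_mem hv]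
      rcases hmem0 v hv0 with hv0 | hv1
      · exact e.notMem_l0 hac (e.pathy.reflTransGen_of_mem hwy).1 hwv hv0
      · exact hac w (hwv.trans_left (hsplit.1.reflTransGen_of_mem hv1).2)
    inter_z := by
      rintro v hvz (hv | (_ | ⟨_, hv⟩) | hv)
      · exact (hmem0 v hv).elim (e.inter_z v hvz <| .inl ·)
          (e.inter_z v hvz <| .inr <| .inr <| hy₁ v ·)
      · exact e.inter_z _ hvz (.inr (.inr hwy))
      · exact absurd hvz (htz v hv)
      · exact e.inter_z v hvz (.inr (.inr (hy₂ v hv))) }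

theorem notMem_lz_of_mem_visSet (hN : N.Wf) {g : N.V} {c : X} {π : List N.V} (hg : g ∈ e.lx)
    (hc : c ∈ N.visSet g) (hπ : N.IsPathFromTo (g :: π) g (N.leaf c)) {v : N.V} (hv : v ∈ π) :
    v ∉ e.lz := by
  -- `root ⇝ p ⇝ v ⇝ c` must pass through `g`, which forces `g ⇝ p → q ⇝ g`.
  intro hvz
  obtain ⟨s, s', hs⟩ := List.append_of_mem hvz
  obtain ⟨r, r', hr⟩ := List.append_of_mem hv
  have hpath : N.IsPathFromTo (s ++ [v] ++ r') e.p (N.leaf c) := by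
    simpa using (e.pathz.split hs).1.append (hπ.split (l₁ := g :: r) (by simp [hr])).2
  have hgp : ReflTransGen N.arc g e.p := by
    rcases hN.reflTransGen_or_mem_of_mem_visSet hc hpath with h | h
    · exact h
    rcases List.mem_append.1 h with h | h
    · have hgz : g ∈ e.lz := by
        rw [hs]; simp only [List.mem_append, List.mem_cons, List.not_mem_nil] at h ⊢; tauto
      exact e.inter_z g hgz (.inr (.inl hg)) ▸ .refl
    · exact absurd (hπ.transGen_of_mem (by simp [hr, h])) (hN.acyclic_s8 g)
  exact hN.acyclic_s8 g
    (TransGen.trans_right hgp (e.transGen_p_q.trans_left (e.pathx.reflTransGen_of_mem hg).1))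

theorem nonempty_of_mem_visSet (hN : N.Wf) {g : N.V} {c : X} (hg : g ∈ e.lx)
    (hc : c ∈ N.visSet g) : Nonempty (N.TripleEmbedding c y z) := by
  obtain ⟨π, hπ⟩ := hN.exists_path_from_root (N.leaf c)
  obtain ⟨π₁, π₂, hπ₁₂⟩ := List.append_of_mem (hc π hπ)
  have hρ := (hπ.split hπ₁₂).2
  have hz : ∀ v ∈ π₂, v ∉ e.lz := fun v hv => e.notMem_lz_of_mem_visSet hN hg hc hρ hv
  by_cases hy : ∃ v ∈ π₂, v ∈ e.ly
  · obtain ⟨s, w, t, hst, hw, ht⟩ := List.exists_eq_append_cons_last _ π₂ hy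
    obtain ⟨l₁, l₂, hl⟩ := List.append_of_mem hw
    have hwt : N.IsPathFromTo (w :: t) w (N.leaf c) := (hρ.split (l₁ := g :: s) (by simp [hst])).2
    exact ⟨e.branchFromY hN.acyclic_s8 hl hwt ht fun v hv => hz v (by simp [hst, hv])⟩
  · push Not at hy
    obtain ⟨l₁, l₂, hl⟩ := List.append_of_mem hg
    exact ⟨e.branchFromX hN.acyclic_s8 hl hρ hy hz⟩

end TripleEmbedding

end Network

theorem vgb_property_v_general {X : Type} (N : Network X)
    (h : N.IsBinaryPhylo) (a b : X)
    (pa pb gb : N.V)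
    (hpa : N.arc pa (N.leaf a)) (hpb : N.arc pb (N.leaf b))
    (hretic : N.IsRetic pb) (hpapb : N.arc pa pb) (hgbpb : N.arc gb pb)
    (hgbpa : gb ≠ pa) :
    ∀ x y : X, x ∉ N.visSet gb → x ≠ a → x ≠ b →
      y ∉ N.visSet gb → y ≠ a → y ≠ b →
      N.Displays b x y → ¬ N.Displays a x y →
      ∀ c ∈ N.visSet gb, N.Displays c x y := by
  intro x y hx hxa hxb hy hya hyb hbxy hnaxy c hc
  have hN : N.Wf := h.wf_of_ne hbxy.1
  obtain ⟨-, -, hxy, ⟨e⟩⟩ := Network.displays_iff.1 hbxy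
  obtain ⟨g, hg, hgpb⟩ := hN.exists_mem_arc_of_unique_child e.pathx hpb hretic.2
    e.pathy.reflTransGen hxb
  refine Network.displays_iff.2 ⟨ne_of_mem_of_not_mem hc hx, ne_of_mem_of_not_mem hc hy, hxy, ?_⟩
  rcases Set.eq_or_eq_of_ncard_eq_two hretic.1 hgbpb hpapb hgbpa hgpb with rfl | rfl
  · exact e.nonempty_of_mem_visSet hN hg hc
  · obtain ⟨l₁, l₂, hl⟩ := List.append_of_mem hg
    have hay : ∀ v ∈ [N.leaf a], v ∉ e.ly := by
      simpa using fun ha => hxa (hN.eq_of_leaf_mem e.pathy ha).symm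
    have haz : ∀ v ∈ [N.leaf a], v ∉ e.lz := by
      simpa using fun ha => hya (hN.eq_of_leaf_mem e.pathz ha).symm
    have hpath : N.IsPathFromTo [g, N.leaf a] g (N.leaf a) := ⟨List.isChain_pair.2 hpa, rfl, rfl⟩
    exact absurd (Network.displays_iff.2
      ⟨hxa.symm, hya.symm, hxy, ⟨e.branchFromX hN.acyclic_s8 hl hpath hay haz⟩⟩) hnaxy

/-- Lemma (v): for a reticulated cherry `{a,b}` with reticulation leaf `b` in
a binary normal network `N`, with `g_b` the grandparent of `b` other than the
parent `p_a` of `a`: if `N` displays `bx|y` but not `ax|y`, where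
`x, y ∈ X - (V_{g_b} ∪ {a,b})`, then `N` displays `cx|y` for all `c ∈ V_{g_b}`. -/
theorem vgb_property_v {X : Type} (N : Network X)
    (h : N.IsBinaryPhylo) (hn : N.IsNormal) (a b : X) (hab : a ≠ b)
    (pa pb gb : N.V)
    (hpa : N.arc pa (N.leaf a)) (hpb : N.arc pb (N.leaf b))
    (hretic : N.IsRetic pb) (hpapb : N.arc pa pb) (hgbpb : N.arc gb pb)
    (hgbpa : gb ≠ pa) :
    ∀ x y : X, x ∉ N.visSet gb → x ≠ a → x ≠ b →
      y ∉ N.visSet gb → y ≠ a → y ≠ b →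
      N.Displays b x y → ¬ N.Displays a x y →
      ∀ c ∈ N.visSet gb, N.Displays c x y :=
  vgb_property_v_general N h a b pa pb gb hpa hpb hretic hpapb hgbpb hgbpa
end
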